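/- arXiv:1912.10765 — 5 statements merged into one kernel-verified Lean document; each statement's English description precedes it below -/
import Mathlib

section
/- Let A be an n×n complex matrix with 2×2 block structure. Then the quadratic numerical range W²(A) is contained in the numerical range W(A). -/
/-! A point `z` of `W²(A)` is an eigenvalue of the compression `Vᴴ A V` of `A` to the span of
`(x₁, 0)` and `(0, x₂)`, where `V` has these two orthonormal columns. If `w` is a unit eigenvector,
then `Vw` is a unit vector and `z = w* Vᴴ A V w = (Vw)* A (Vw) ∈ W(A)`. -/

open Matrix

noncomputable section

/-- The numerical range (field of values) of a complex matrix. -/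
def numRange {ι : Type*} [Fintype ι] (A : Matrix ι ι ℂ) : Set ℂ :=
  {z | ∃ x : ι → ℂ, star x ⬝ᵥ x = 1 ∧ z = star x ⬝ᵥ A.mulVec x}

/-- The quadratic numerical range of a 2×2 block matrix, given by its blocks. -/
def quadRange {n1 n2 : ℕ} (A11 : Matrix (Fin n1) (Fin n1) ℂ)
    (A12 : Matrix (Fin n1) (Fin n2) ℂ) (A21 : Matrix (Fin n2) (Fin n1) ℂ)
    (A22 : Matrix (Fin n2) (Fin n2) ℂ) : Set ℂ :=
  {z | ∃ x1 : Fin n1 → ℂ, ∃ x2 : Fin n2 → ℂ,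
    star x1 ⬝ᵥ x1 = 1 ∧ star x2 ⬝ᵥ x2 = 1 ∧
    z ∈ spectrum ℂ (!![star x1 ⬝ᵥ A11.mulVec x1, star x1 ⬝ᵥ A12.mulVec x2;
                       star x2 ⬝ᵥ A21.mulVec x1, star x2 ⬝ᵥ A22.mulVec x2])}

open scoped ComplexOrder

namespace Matrix

variable {ι κ : Type*} [Fintype ι] [Fintype κ]

theorem dotProduct_mulVec_div_mem_numRange (A : Matrix ι ι ℂ) {v : ι → ℂ} (hv : v ≠ 0) :
    (star v ⬝ᵥ A *ᵥ v) / (star v ⬝ᵥ v) ∈ numRange A := by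
  obtain ⟨hre, him⟩ := Complex.pos_iff.1 (dotProduct_star_self_pos_iff.2 hv)
  set s := Real.sqrt (star v ⬝ᵥ v).re
  have hs : (s : ℂ) ≠ 0 := Complex.ofReal_ne_zero.2 (Real.sqrt_pos.2 hre).ne'
  have hvv : star v ⬝ᵥ v = (s : ℂ) * s := by
    rw [← Complex.ofReal_mul, Real.mul_self_sqrt hre.le]
    exact Complex.ext rfl (by simp [him])
  refine ⟨(s : ℂ)⁻¹ • v, ?_, ?_⟩
  · simp only [star_smul, star_inv₀, RCLike.star_def, Complex.conj_ofReal, dotProduct_smul,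
      smul_dotProduct, hvv, smul_eq_mul]
    field_simp
  · simp only [hvv, star_smul, star_inv₀, RCLike.star_def, Complex.conj_ofReal, mulVec_smul,
      dotProduct_smul, smul_dotProduct, smul_eq_mul]
    field_simp

theorem spectrum_subset_numRange [DecidableEq ι] (A : Matrix ι ι ℂ) :
    spectrum ℂ A ⊆ numRange A := by
  intro z hz
  rw [← spectrum_toLin', ← Module.End.hasEigenvalue_iff_mem_spectrum] at hz
  obtain ⟨v, hv⟩ := hz.exists_hasEigenvector
  have hAv : A *ᵥ v = z • v := by simpa using hv.apply_eq_smul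
  have hvv : star v ⬝ᵥ v ≠ 0 := (dotProduct_star_self_pos_iff.2 hv.2).ne'
  simpa [hAv, hvv] using dotProduct_mulVec_div_mem_numRange A hv.2

theorem numRange_conjTranspose_mul_mul_subset [DecidableEq κ] (A : Matrix ι ι ℂ)
    {V : Matrix ι κ ℂ} (hV : Vᴴ * V = 1) : numRange (Vᴴ * A * V) ⊆ numRange A := by
  rintro z ⟨x, hx, rfl⟩
  refine ⟨V *ᵥ x, ?_, ?_⟩
  · rw [star_mulVec, dotProduct_mulVec, vecMul_vecMul, ← hx, hV, vecMul_one]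
  · simp only [star_mulVec, dotProduct_mulVec, vecMul_vecMul, mulVec_mulVec, Matrix.mul_assoc]

omit [Fintype κ] in
theorem conjTranspose_mul_mul_apply (V : Matrix ι κ ℂ) (A : Matrix ι ι ℂ) (i j : κ) :
    (Vᴴ * A * V) i j = star (fun k ↦ V k i) ⬝ᵥ A *ᵥ fun k ↦ V k j := by
  simp only [mul_apply', dotProduct_mulVec]
  rfl

variable {ι₁ ι₂ : Type*} [Fintype ι₁] [Fintype ι₂]

def blockColumns (x₁ : ι₁ → ℂ) (x₂ : ι₂ → ℂ) : Matrix (ι₁ ⊕ ι₂) (Fin 2) ℂ :=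
  of fun k ↦ ![Sum.elim x₁ 0 k, Sum.elim 0 x₂ k]

theorem conjTranspose_blockColumns_mul_fromBlocks_mul (x₁ : ι₁ → ℂ) (x₂ : ι₂ → ℂ)
    (A₁₁ : Matrix ι₁ ι₁ ℂ) (A₁₂ : Matrix ι₁ ι₂ ℂ) (A₂₁ : Matrix ι₂ ι₁ ℂ) (A₂₂ : Matrix ι₂ ι₂ ℂ) :
    (blockColumns x₁ x₂)ᴴ * fromBlocks A₁₁ A₁₂ A₂₁ A₂₂ * blockColumns x₁ x₂ =
      !![star x₁ ⬝ᵥ A₁₁ *ᵥ x₁, star x₁ ⬝ᵥ A₁₂ *ᵥ x₂;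
         star x₂ ⬝ᵥ A₂₁ *ᵥ x₁, star x₂ ⬝ᵥ A₂₂ *ᵥ x₂] := by
  ext i j
  fin_cases i <;> fin_cases j <;>
    simp [conjTranspose_mul_mul_apply, blockColumns, fromBlocks_mulVec, Function.star_sumElim,
      sumElim_dotProduct_sumElim]

theorem conjTranspose_blockColumns_mul_self [DecidableEq ι₁] [DecidableEq ι₂]
    {x₁ : ι₁ → ℂ} {x₂ : ι₂ → ℂ}
    (hx₁ : star x₁ ⬝ᵥ x₁ = 1) (hx₂ : star x₂ ⬝ᵥ x₂ = 1) :
    (blockColumns x₁ x₂)ᴴ * blockColumns x₁ x₂ = 1 := by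
  simpa [fromBlocks_one, hx₁, hx₂, one_fin_two] using
    conjTranspose_blockColumns_mul_fromBlocks_mul x₁ x₂ 1 0 0 1

end Matrix

/-- The quadratic numerical range is contained in the numerical range. -/
theorem stmt2 {n1 n2 : ℕ} (A11 : Matrix (Fin n1) (Fin n1) ℂ)
    (A12 : Matrix (Fin n1) (Fin n2) ℂ) (A21 : Matrix (Fin n2) (Fin n1) ℂ)
    (A22 : Matrix (Fin n2) (Fin n2) ℂ) :
    quadRange A11 A12 A21 A22 ⊆ numRange (Matrix.fromBlocks A11 A12 A21 A22) := by
  rintro z ⟨x1, x2, hx1, hx2, hz⟩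
  rw [← conjTranspose_blockColumns_mul_fromBlocks_mul] at hz
  exact numRange_conjTranspose_mul_mul_subset _ (conjTranspose_blockColumns_mul_self hx1 hx2)
    (spectrum_subset_numRange _ hz)
end
end

section
/- Let A be an n×n complex matrix with 2×2 block structure with block sizes n1, n2 ≥ 2. Then the numerical ranges of the diagonal blocks satisfy W(A11) ⊆ W²(A) and W(A22) ⊆ W²(A). -/
open Matrix Module InnerProductSpace

noncomputable section

/-!
A point `⟪A₁₁x₁, x₁⟫` of `W(A₁₁)` is a diagonal entry of the `2 × 2` compression in the
definition of `W²(A)`. Since `n₂ ≥ 2`, the unit vector `x₂` can be chosen orthogonal to `A₂₁x₁`;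
the compression is then upper triangular, so `⟪A₁₁x₁, x₁⟫` is one of its eigenvalues. The case
of `A₂₂` is symmetric.
-/

theorem Matrix.mem_spectrum_fin_two_iff {K : Type*} [Field K] {a b c d z : K} :
    z ∈ spectrum K !![a, b; c, d] ↔ (a - z) * (d - z) = b * c := by
  rw [mem_spectrum_iff_isRoot_charpoly, charpoly_fin_two, trace_fin_two, det_fin_two]
  simp only [Polynomial.IsRoot.def, Polynomial.eval_add, Polynomial.eval_sub, Polynomial.eval_pow,
    Polynomial.eval_mul, Polynomial.eval_X, Polynomial.eval_C, of_apply, cons_val', cons_val_zero,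
    cons_val_one, empty_val', cons_val_fin_one]
  constructor <;> intro h <;> linear_combination h

theorem exists_norm_eq_one_inner_eq_zero {𝕜 E : Type*} [RCLike 𝕜] [NormedAddCommGroup E]
    [InnerProductSpace 𝕜 E] [FiniteDimensional 𝕜 E] (hE : 1 < finrank 𝕜 E) (v : E) :
    ∃ x : E, ‖x‖ = 1 ∧ ⟪x, v⟫_𝕜 = 0 := by
  have hspan : finrank 𝕜 (𝕜 ∙ v) ≤ 1 := by
    simpa using finrank_span_le_card ({v} : Set E)
  have hpos : 0 < finrank 𝕜 (𝕜 ∙ v)ᗮ := by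
    have := (𝕜 ∙ v).finrank_add_finrank_orthogonal
    omega
  obtain ⟨w, hw, hw0⟩ :=
    Submodule.exists_mem_ne_zero_of_ne_bot (Submodule.one_le_finrank_iff.mp hpos)
  refine ⟨(‖w‖⁻¹ : 𝕜) • w, norm_smul_inv_norm hw0, ?_⟩
  rw [inner_smul_left, Submodule.mem_orthogonal_singleton_iff_inner_left.mp hw, mul_zero]

theorem exists_star_dotProduct_self_eq_one_and_orthogonal {𝕜 ι : Type*} [RCLike 𝕜] [Fintype ι]
    (hι : 1 < Fintype.card ι) (v : ι → 𝕜) :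
    ∃ x : ι → 𝕜, star x ⬝ᵥ x = 1 ∧ star x ⬝ᵥ v = 0 := by
  obtain ⟨x, hx, hxv⟩ := exists_norm_eq_one_inner_eq_zero (𝕜 := 𝕜)
    (by simpa using hι) (WithLp.toLp 2 v)
  refine ⟨x.ofLp, ?_, ?_⟩
  · rw [dotProduct_comm, ← EuclideanSpace.inner_eq_star_dotProduct, inner_self_eq_norm_sq_to_K, hx]
    simp
  · rwa [dotProduct_comm]

/-- For block sizes at least 2, the numerical ranges of the diagonal blocks are
contained in the quadratic numerical range. -/
theorem stmt3 {n1 n2 : ℕ} (hn1 : 2 ≤ n1) (hn2 : 2 ≤ n2)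
    (A11 : Matrix (Fin n1) (Fin n1) ℂ) (A12 : Matrix (Fin n1) (Fin n2) ℂ)
    (A21 : Matrix (Fin n2) (Fin n1) ℂ) (A22 : Matrix (Fin n2) (Fin n2) ℂ) :
    numRange A11 ⊆ quadRange A11 A12 A21 A22 ∧
    numRange A22 ⊆ quadRange A11 A12 A21 A22 := by
  constructor
  · rintro z ⟨x1, hx1, rfl⟩
    obtain ⟨x2, hx2, horth⟩ := exists_star_dotProduct_self_eq_one_and_orthogonal
      (by rw [Fintype.card_fin]; exact hn2) (A21 *ᵥ x1)
    refine ⟨x1, x2, hx1, hx2, ?_⟩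
    rw [mem_spectrum_fin_two_iff, horth, sub_self, zero_mul, mul_zero]
  · rintro z ⟨x2, hx2, rfl⟩
    obtain ⟨x1, hx1, horth⟩ := exists_star_dotProduct_self_eq_one_and_orthogonal
      (by rw [Fintype.card_fin]; exact hn1) (A12 *ᵥ x2)
    refine ⟨x1, x2, hx1, hx2, ?_⟩
    rw [mem_spectrum_fin_two_iff, horth, sub_self, mul_zero, zero_mul]
end
end

section
/- Let A be a nonsingular n×n complex matrix with 2×2 block structure and suppose 0 ∉ W²(A). Let V1 ∈ ℂ^{n1×m1} and V2 ∈ ℂ^{n2×m2} have orthonormal columns and V = diag(V1,V2). Then the projected matrix H = V*AV is nonsingular. -/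
/-! If `H v = 0` with `v = (y₁, y₂) ≠ 0`, write `Vᵢ yᵢ = cᵢ xᵢ` with `xᵢ` a unit vector in the
range of `Vᵢ` (any one when `yᵢ = 0`). Then `xᵢ* (A (V v))ᵢ = uᵢ* (H v)ᵢ = 0` where `xᵢ = Vᵢ uᵢ`,
which says that `(c₁, c₂) ≠ 0` lies in the kernel of the `2 × 2` matrix `[xᵢ* Aᵢⱼ xⱼ]`;
hence `0 ∈ W²(A)`. -/

open Matrix

noncomputable section

section

variable {m n : Type*} [Fintype m] [Fintype n]

lemma star_mulVec_dotProduct {R : Type*} [CommSemiring R] [StarRing R]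
    (V : Matrix n m R) (u : m → R) (w : n → R) :
    star (V *ᵥ u) ⬝ᵥ w = star u ⬝ᵥ (Vᴴ *ᵥ w) := by
  rw [star_mulVec, dotProduct_mulVec]

lemma star_mulVec_dotProduct_mulVec_of_conjTranspose_mul_self {R : Type*} [CommSemiring R]
    [StarRing R] [DecidableEq m] {V : Matrix n m R} (hV : Vᴴ * V = 1) (u : m → R) :
    star (V *ᵥ u) ⬝ᵥ (V *ᵥ u) = star u ⬝ᵥ u := by
  rw [star_mulVec_dotProduct, mulVec_mulVec, hV, one_mulVec]

lemma dotProduct_star_self_eq_norm_sq (y : m → ℂ) :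
    star y ⬝ᵥ y = (‖WithLp.toLp 2 y‖ ^ 2 : ℝ) := by
  rw [dotProduct_comm, ← EuclideanSpace.inner_toLp_toLp, inner_self_eq_norm_sq_to_K]
  push_cast; rfl

lemma dotProduct_star_self_inv_norm_smul {y : m → ℂ} (hy : y ≠ 0) :
    star ((‖WithLp.toLp 2 y‖ : ℂ)⁻¹ • y) ⬝ᵥ ((‖WithLp.toLp 2 y‖ : ℂ)⁻¹ • y) = 1 := by
  have hn : (‖WithLp.toLp 2 y‖ : ℂ) ≠ 0 := by simpa using hy
  rw [star_smul, smul_dotProduct, dotProduct_smul, dotProduct_star_self_eq_norm_sq]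
  simp only [star_inv₀, Complex.star_def, Complex.conj_ofReal, smul_eq_mul, Complex.ofReal_pow]
  field_simp

lemma exists_dotProduct_star_self_eq_one_smul_eq [Nonempty m] (y : m → ℂ) :
    ∃ u : m → ℂ, ∃ c : ℂ, star u ⬝ᵥ u = 1 ∧ c • u = y := by
  by_cases hy : y = 0
  · have hone : (fun _ => 1 : m → ℂ) ≠ 0 :=
      fun h => one_ne_zero (congrFun h (Classical.arbitrary m))
    exact ⟨_, 0, dotProduct_star_self_inv_norm_smul hone, by rw [zero_smul, hy]⟩
  · refine ⟨_, ‖WithLp.toLp 2 y‖, dotProduct_star_self_inv_norm_smul hy, ?_⟩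
    have hn : (‖WithLp.toLp 2 y‖ : ℂ) ≠ 0 := by simpa using hy
    rw [smul_smul, mul_inv_cancel₀ hn, one_smul]

end

lemma zero_mem_quadRange_of_dotProduct_eq_zero {n1 n2 : ℕ}
    {A11 : Matrix (Fin n1) (Fin n1) ℂ} {A12 : Matrix (Fin n1) (Fin n2) ℂ}
    {A21 : Matrix (Fin n2) (Fin n1) ℂ} {A22 : Matrix (Fin n2) (Fin n2) ℂ}
    {x1 : Fin n1 → ℂ} {x2 : Fin n2 → ℂ} (hx1 : star x1 ⬝ᵥ x1 = 1) (hx2 : star x2 ⬝ᵥ x2 = 1)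
    {c1 c2 : ℂ} (hc : c1 ≠ 0 ∨ c2 ≠ 0)
    (h1 : star x1 ⬝ᵥ (A11 *ᵥ (c1 • x1) + A12 *ᵥ (c2 • x2)) = 0)
    (h2 : star x2 ⬝ᵥ (A21 *ᵥ (c1 • x1) + A22 *ᵥ (c2 • x2)) = 0) :
    0 ∈ quadRange A11 A12 A21 A22 := by
  refine ⟨x1, x2, hx1, hx2, ?_⟩
  rw [spectrum.zero_mem_iff, isUnit_iff_isUnit_det, isUnit_iff_ne_zero, not_not,
    ← exists_mulVec_eq_zero_iff]
  refine ⟨![c1, c2], by simpa [funext_iff, Fin.forall_fin_two, or_iff_not_imp_left] using hc, ?_⟩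
  simp only [mulVec_smul, dotProduct_add, dotProduct_smul, smul_eq_mul] at h1 h2
  ext i
  fin_cases i <;> simp [h1, h2]

end

theorem stmt5_general {n1 n2 m1 m2 : ℕ} (hm1 : 0 < m1) (hm2 : 0 < m2)
    (A11 : Matrix (Fin n1) (Fin n1) ℂ) (A12 : Matrix (Fin n1) (Fin n2) ℂ)
    (A21 : Matrix (Fin n2) (Fin n1) ℂ) (A22 : Matrix (Fin n2) (Fin n2) ℂ)
    (h0 : (0 : ℂ) ∉ quadRange A11 A12 A21 A22)
    (V1 : Matrix (Fin n1) (Fin m1) ℂ) (V2 : Matrix (Fin n2) (Fin m2) ℂ)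
    (hV1 : V1ᴴ * V1 = 1) (hV2 : V2ᴴ * V2 = 1) :
    IsUnit (Matrix.fromBlocks (V1ᴴ * A11 * V1) (V1ᴴ * A12 * V2)
      (V2ᴴ * A21 * V1) (V2ᴴ * A22 * V2)) := by
  have : Nonempty (Fin m1) := ⟨⟨0, hm1⟩⟩
  have : Nonempty (Fin m2) := ⟨⟨0, hm2⟩⟩
  rw [isUnit_iff_isUnit_det, isUnit_iff_ne_zero]
  intro hdet
  obtain ⟨v, hv, hHv⟩ := exists_mulVec_eq_zero_iff.mpr hdet
  rw [fromBlocks_mulVec] at hHv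
  have hrow1 : (V1ᴴ * A11 * V1) *ᵥ (v ∘ Sum.inl) + (V1ᴴ * A12 * V2) *ᵥ (v ∘ Sum.inr) = 0 :=
    funext fun i => congrFun hHv (Sum.inl i)
  have hrow2 : (V2ᴴ * A21 * V1) *ᵥ (v ∘ Sum.inl) + (V2ᴴ * A22 * V2) *ᵥ (v ∘ Sum.inr) = 0 :=
    funext fun i => congrFun hHv (Sum.inr i)
  obtain ⟨u1, c1, hu1, hcu1⟩ := exists_dotProduct_star_self_eq_one_smul_eq (v ∘ Sum.inl)
  obtain ⟨u2, c2, hu2, hcu2⟩ := exists_dotProduct_star_self_eq_one_smul_eq (v ∘ Sum.inr)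
  have hc : c1 ≠ 0 ∨ c2 ≠ 0 := by
    by_contra! h
    refine hv (funext fun i => ?_)
    rcases i with i | i
    · simpa [h.1] using (congrFun hcu1 i).symm
    · simpa [h.2] using (congrFun hcu2 i).symm
  refine h0 (zero_mem_quadRange_of_dotProduct_eq_zero
    ((star_mulVec_dotProduct_mulVec_of_conjTranspose_mul_self hV1 u1).trans hu1)
    ((star_mulVec_dotProduct_mulVec_of_conjTranspose_mul_self hV2 u2).trans hu2) hc ?_ ?_) <;>
  · simp only [← mulVec_smul, hcu1, hcu2, star_mulVec_dotProduct, mulVec_add, mulVec_mulVec,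
      ← Matrix.mul_assoc, hrow1, hrow2, dotProduct_zero]

/-- If `A` is nonsingular and `0 ∉ W²(A)`, then the block-diagonal orthonormal
compression `H = V*AV` is nonsingular. -/
theorem stmt5 {n1 n2 m1 m2 : ℕ} (hm1 : 0 < m1) (hm2 : 0 < m2)
    (hm1n : m1 ≤ n1) (hm2n : m2 ≤ n2)
    (A11 : Matrix (Fin n1) (Fin n1) ℂ) (A12 : Matrix (Fin n1) (Fin n2) ℂ)
    (A21 : Matrix (Fin n2) (Fin n1) ℂ) (A22 : Matrix (Fin n2) (Fin n2) ℂ)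
    (hA : IsUnit (Matrix.fromBlocks A11 A12 A21 A22))
    (h0 : (0 : ℂ) ∉ quadRange A11 A12 A21 A22)
    (V1 : Matrix (Fin n1) (Fin m1) ℂ) (V2 : Matrix (Fin n2) (Fin m2) ℂ)
    (hV1 : V1ᴴ * V1 = 1) (hV2 : V2ᴴ * V2 = 1) :
    IsUnit (Matrix.fromBlocks (V1ᴴ * A11 * V1) (V1ᴴ * A12 * V2)
      (V2ᴴ * A21 * V1) (V2ᴴ * A22 * V2)) :=
  stmt5_general hm1 hm2 A11 A12 A21 A22 h0 V1 V2 hV1 hV2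
end

section
/- Let A = [[λ1 I, A12],[0, λ2 I]] with λ1, λ2 ≠ 0, and b = (b1, b2) with b1, b2 ≠ 0. Then the unique solution of Ax = b is x* = ((1/λ1)(b1 − (1/λ2)A12 b2), (1/λ2) b2), and the first QFOM iterate x⁽¹⁾ = diag(b1/‖b1‖, b2/‖b2‖)·H⁻¹·(‖b1‖, ‖b2‖)ᵀ, where H = [[λ1, b1*A12b2/(‖b1‖‖b2‖)],[0, λ2]], equals x* if and only if A12 b2 is zero or a scalar multiple of b1. -/
/-!
Both `A` and the compressed matrix `H` are block upper triangular, so everything is computed by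
back substitution. The second block of `x⁽¹⁾` is `λ₂⁻¹ b₂`, exactly as in `x*`, and the first block
is `λ₁⁻¹ (b₁ - λ₂⁻¹ P (A₁₂ b₂))`, where `P` is the orthogonal projection onto the line through
`b₁`. Hence `x⁽¹⁾ = x*` exactly when `P` fixes `A₁₂ b₂`, i.e. when `A₁₂ b₂` lies on that line.
-/

open Matrix

open scoped ComplexOrder

section BlockUpperTriangular

variable {K m n : Type*} [Fintype m] [Fintype n] [DecidableEq m] [DecidableEq n]

theorem fromBlocks_smul_one_mulVec_sumElim [CommRing K] (a d : K) (B : Matrix m n K)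
    (u : m → K) (w : n → K) :
    fromBlocks (a • 1) B 0 (d • 1) *ᵥ Sum.elim u w = Sum.elim (a • u + B *ᵥ w) (d • w) := by
  simp [fromBlocks_mulVec, smul_mulVec]

theorem fromBlocks_smul_one_mulVec_eq_sumElim_iff [Field K] {a d : K} (ha : a ≠ 0) (hd : d ≠ 0)
    (B : Matrix m n K) (x : m ⊕ n → K) (f : m → K) (g : n → K) :
    fromBlocks (a • 1) B 0 (d • 1) *ᵥ x = Sum.elim f g ↔
      x = Sum.elim (a⁻¹ • (f - d⁻¹ • (B *ᵥ g))) (d⁻¹ • g) := by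
  rw [← Sum.elim_comp_inl_inr x, fromBlocks_smul_one_mulVec_sumElim, Sum.elim_eq_iff,
    Sum.elim_eq_iff, eq_inv_smul_iff₀ hd, eq_inv_smul_iff₀ ha, eq_sub_iff_add_eq]
  constructor
  · rintro ⟨hu, rfl⟩
    rw [← mulVec_smul, inv_smul_smul₀ hd, hu]
    exact ⟨rfl, rfl⟩
  · rintro ⟨hu, rfl⟩
    rw [← mulVec_smul, inv_smul_smul₀ hd] at hu
    exact ⟨hu, rfl⟩

end BlockUpperTriangular

theorem inv_upperTriangular_two_mulVec {K : Type*} [Field K] {a d : K} (ha : a ≠ 0) (hd : d ≠ 0)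
    (h p q : K) : !![a, h; 0, d]⁻¹ *ᵥ ![p, q] = ![(p - h * (q / d)) / a, q / d] := by
  have : Invertible !![a, h; 0, d] :=
    invertibleOfIsUnitDet _ (by simpa [det_fin_two_of] using mul_ne_zero ha hd)
  refine inv_mulVec_eq_vec ?_
  ext i
  fin_cases i <;> simp [mulVec, dotProduct, Fin.sum_univ_two] <;> field_simp; ring

theorem div_dotProduct_star_self_smul_eq_iff {K n : Type*} [Field K] [StarRing K] [PartialOrder K]
    [StarOrderedRing K] [Fintype n] (b v : n → K) :
    ((star b ⬝ᵥ v) / (star b ⬝ᵥ b)) • b = v ↔ ∃ c : K, v = c • b := by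
  refine ⟨fun h => ⟨_, h.symm⟩, ?_⟩
  rintro ⟨c, rfl⟩
  rcases eq_or_ne b 0 with rfl | hb
  · simp
  · rw [dotProduct_smul, smul_eq_mul, mul_div_assoc,
      div_self (dotProduct_star_self_eq_zero.not.mpr hb), mul_one]

theorem ofReal_sqrt_re_dotProduct_star_self_mul_self {n : Type*} [Fintype n] (v : n → ℂ) :
    ((√(star v ⬝ᵥ v).re : ℝ) : ℂ) * (√(star v ⬝ᵥ v).re : ℝ) = star v ⬝ᵥ v := by
  have hv := dotProduct_star_self_nonneg v
  rw [← Complex.ofReal_mul, Real.mul_self_sqrt (Complex.nonneg_iff.mp hv).1]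
  exact (Complex.eq_re_of_ofReal_le hv).symm

/-- QFOM first-iterate characterization for `A = [[λ₁ I, A₁₂],[0, λ₂ I]]`. -/
theorem stmt8 {n1 n2 : ℕ} (A12 : Matrix (Fin n1) (Fin n2) ℂ) (lam1 lam2 : ℂ)
    (hlam1 : lam1 ≠ 0) (hlam2 : lam2 ≠ 0)
    (b1 : Fin n1 → ℂ) (b2 : Fin n2 → ℂ) (hb1 : b1 ≠ 0) (hb2 : b2 ≠ 0) :
    let A : Matrix (Fin n1 ⊕ Fin n2) (Fin n1 ⊕ Fin n2) ℂ :=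
      Matrix.fromBlocks (lam1 • (1 : Matrix (Fin n1) (Fin n1) ℂ)) A12 0
        (lam2 • (1 : Matrix (Fin n2) (Fin n2) ℂ))
    let b : Fin n1 ⊕ Fin n2 → ℂ := Sum.elim b1 b2
    let xstar : Fin n1 ⊕ Fin n2 → ℂ :=
      Sum.elim (lam1⁻¹ • (b1 - lam2⁻¹ • (A12 *ᵥ b2))) (lam2⁻¹ • b2)
    let nb1 : ℂ := (Real.sqrt (star b1 ⬝ᵥ b1).re : ℝ)
    let nb2 : ℂ := (Real.sqrt (star b2 ⬝ᵥ b2).re : ℝ)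
    let H : Matrix (Fin 2) (Fin 2) ℂ :=
      !![lam1, (star b1 ⬝ᵥ (A12 *ᵥ b2)) / (nb1 * nb2); 0, lam2]
    let ξ : Fin 2 → ℂ := H⁻¹ *ᵥ ![nb1, nb2]
    let x1 : Fin n1 ⊕ Fin n2 → ℂ :=
      Sum.elim ((ξ 0 / nb1) • b1) ((ξ 1 / nb2) • b2)
    (A *ᵥ xstar = b ∧ ∀ x : Fin n1 ⊕ Fin n2 → ℂ, A *ᵥ x = b → x = xstar) ∧
    (x1 = xstar ↔ (A12 *ᵥ b2 = 0 ∨ ∃ c : ℂ, A12 *ᵥ b2 = c • b1)) := by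
  intro A b xstar nb1 nb2 H ξ x1
  have hsq1 : nb1 * nb1 = star b1 ⬝ᵥ b1 := ofReal_sqrt_re_dotProduct_star_self_mul_self b1
  have hsq2 : nb2 * nb2 = star b2 ⬝ᵥ b2 := ofReal_sqrt_re_dotProduct_star_self_mul_self b2
  have hnb1 : nb1 ≠ 0 := left_ne_zero_of_mul (hsq1 ▸ dotProduct_star_self_eq_zero.not.mpr hb1)
  have hnb2 : nb2 ≠ 0 := left_ne_zero_of_mul (hsq2 ▸ dotProduct_star_self_eq_zero.not.mpr hb2)
  have hsolve (x : Fin n1 ⊕ Fin n2 → ℂ) : A *ᵥ x = b ↔ x = xstar :=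
    fromBlocks_smul_one_mulVec_eq_sumElim_iff hlam1 hlam2 A12 x b1 b2
  refine ⟨⟨(hsolve xstar).mpr rfl, fun x => (hsolve x).mp⟩, ?_⟩
  have hξ : ξ = _ := inv_upperTriangular_two_mulVec hlam1 hlam2 _ nb1 nb2
  have hx1 : x1 = Sum.elim
      (lam1⁻¹ • (b1 - lam2⁻¹ • (((star b1 ⬝ᵥ (A12 *ᵥ b2)) / (star b1 ⬝ᵥ b1)) • b1)))
      (lam2⁻¹ • b2) := by
    simp only [x1, hξ, cons_val_zero, cons_val_one, smul_sub, smul_smul, ← sub_smul, ← hsq1]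
    congr 2 <;> field_simp
  rw [hx1, Sum.elim_eq_iff, smul_right_inj (inv_ne_zero hlam1), sub_right_inj,
    smul_right_inj (inv_ne_zero hlam2), div_dotProduct_star_self_smul_eq_iff,
    or_iff_right_of_imp fun h => ⟨0, by rw [h, zero_smul]⟩]
  exact and_iff_left rfl
end

section
/- Let Q = [[A, B],[B*, −A]] be a Hermitian block matrix where A is Hermitian with smallest eigenvalue α_min > 0 and B is arbitrary. Then every λ ∈ W²(Q) satisfies |Re(λ)| ≥ α_min; i.e., the quadratic numerical range of Q has a gap of half-width α_min around the imaginary axis. -/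
open Matrix

noncomputable section

/-!
For unit vectors `x₁, x₂` the compressed matrix is `[[α₁, β], [conj β, -α₂]]` with
`αᵢ = xᵢ* A xᵢ` real and at least `αmin` (Rayleigh quotient bound), so `λ` solves
`(λ - α₁)(λ + α₂) = |β|²`. Taking real parts, `(Re λ - α₁)(Re λ + α₂) = |β|² + (Im λ)² ≥ 0`,
which forces `Re λ ≥ α₁` or `Re λ ≤ -α₂`.
-/

namespace Matrix

open scoped MatrixOrder in
lemma IsHermitian.mul_re_dotProduct_le_re_dotProduct_mulVec {𝕜 n : Type*} [RCLike 𝕜]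
    [Fintype n] [DecidableEq n] {A : Matrix n n 𝕜} (hA : A.IsHermitian) {c : ℝ}
    (hc : c ∈ lowerBounds (Set.range hA.eigenvalues)) (x : n → 𝕜) :
    c * RCLike.re (star x ⬝ᵥ x) ≤ RCLike.re (star x ⬝ᵥ A *ᵥ x) := by
  have hle : algebraMap ℝ (Matrix n n 𝕜) c ≤ A := by
    rwa [algebraMap_le_iff_le_spectrum hA.isSelfAdjoint, hA.spectrum_real_eq_range_eigenvalues]
  have := (le_iff.mp hle).re_dotProduct_nonneg x
  simpa [sub_mulVec, Algebra.algebraMap_eq_smul_one, smul_mulVec, dotProduct_smul,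
    RCLike.smul_re] using this

lemma mem_spectrum_fin_two_iff_s14 {K : Type*} [Field K] {a b c d lam : K} :
    lam ∈ spectrum K !![a, b; c, d] ↔ (lam - a) * (lam - d) = b * c := by
  rw [spectrum.mem_iff, isUnit_iff_isUnit_det, isUnit_iff_ne_zero, not_not, det_fin_two,
    sub_eq_zero]
  simp [algebraMap_matrix_apply]

lemma star_dotProduct_conjTranspose_mulVec {R m n : Type*} [CommSemiring R] [StarRing R]
    [Fintype m] [Fintype n] (B : Matrix m n R) (x : m → R) (y : n → R) :
    star y ⬝ᵥ Bᴴ *ᵥ x = star (star x ⬝ᵥ B *ᵥ y) := by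
  rw [star_dotProduct, star_mulVec, conjTranspose_conjTranspose, ← dotProduct_mulVec]

lemma IsHermitian.ofReal_re_star_dotProduct_mulVec {𝕜 n : Type*} [RCLike 𝕜] [Fintype n]
    {A : Matrix n n 𝕜} (hA : A.IsHermitian) (x : n → 𝕜) :
    (RCLike.re (star x ⬝ᵥ A *ᵥ x) : 𝕜) = star x ⬝ᵥ A *ᵥ x :=
  RCLike.conj_eq_iff_re.mp (RCLike.conj_eq_iff_im.mpr (hA.im_star_dotProduct_mulVec_self x))

end Matrix

lemma Complex.le_abs_re_of_mul_eq_ofReal {z : ℂ} {a₁ a₂ c r : ℝ}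
    (h : (z - a₁) * (z + a₂) = r) (hr : 0 ≤ r) (h₁ : c ≤ a₁) (h₂ : c ≤ a₂) : c ≤ |z.re| := by
  have hre : (z.re - a₁) * (z.re + a₂) = r + z.im ^ 2 := by
    have := congrArg Complex.re h
    simp only [mul_re, sub_re, add_re, sub_im, add_im, ofReal_re, ofReal_im] at this
    linear_combination this
  by_contra! hlt
  rw [abs_lt] at hlt
  nlinarith [sq_nonneg z.im]

theorem stmt14_general {n : ℕ} (A B : Matrix (Fin n) (Fin n) ℂ) (hA : A.IsHermitian)
    (αmin : ℝ)
    (hmin : IsLeast (Set.range hA.eigenvalues) αmin) :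
    ∀ lam ∈ quadRange A B Bᴴ (-A), αmin ≤ |lam.re| := by
  rintro lam ⟨x₁, x₂, hx₁, hx₂, hlam⟩
  have hform (x : Fin n → ℂ) (hx : star x ⬝ᵥ x = 1) :
      ∃ α : ℝ, αmin ≤ α ∧ star x ⬝ᵥ A *ᵥ x = α := by
    refine ⟨_, ?_, (hA.ofReal_re_star_dotProduct_mulVec x).symm⟩
    simpa [hx] using hA.mul_re_dotProduct_le_re_dotProduct_mulVec hmin.2 x
  obtain ⟨α₁, hα₁, h₁⟩ := hform x₁ hx₁
  obtain ⟨α₂, hα₂, h₂⟩ := hform x₂ hx₂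
  rw [mem_spectrum_fin_two_iff_s14, neg_mulVec, dotProduct_neg, star_dotProduct_conjTranspose_mulVec,
    h₁, h₂] at hlam
  have hchar : (lam - α₁) * (lam + α₂) = Complex.normSq (star x₁ ⬝ᵥ B *ᵥ x₂) := by
    rw [← Complex.mul_conj, ← Complex.star_def]
    linear_combination hlam
  exact Complex.le_abs_re_of_mul_eq_ofReal hchar (Complex.normSq_nonneg _) hα₁ hα₂

/-- For the Hermitian block matrix `Q = [[A, B],[B*, −A]]` with `A` Hermitian with
smallest eigenvalue `αmin > 0`, every `λ ∈ W²(Q)` satisfies `|Re λ| ≥ αmin`. -/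
theorem stmt14 {n : ℕ} (A B : Matrix (Fin n) (Fin n) ℂ) (hA : A.IsHermitian)
    (αmin : ℝ) (hpos : 0 < αmin)
    (hmin : IsLeast (Set.range hA.eigenvalues) αmin) :
    ∀ lam ∈ quadRange A B Bᴴ (-A), αmin ≤ |lam.re| :=
  stmt14_general A B hA αmin hmin
end
end
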